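/- Under the assumptions that A is n×n with ρ(A) ≥ 1, W is symmetric positive semidefinite, (A,√W) is controllable, and P̄₀ is symmetric positive semidefinite: there exist constants N > 0 and η > 0 such that c(i) = Tr(A^i P̄₀ (A^⊤)^i) + ∑_{m=0}^{i−1} Tr(A^m W (A^⊤)^m) ≥ η·ρ(A)^(2i) for all i > N. -/

import Mathlib

/-!
Let `μ` be an eigenvalue of `A` of maximal modulus and `v` a complex left eigenvector,
`vᵀ A = μ vᵀ`. Then `vᵀ Aᵐ √W = μᵐ vᵀ √W`, and `vᵀ √W ≠ 0`, since otherwise `vᵀ` would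
annihilate the controllability matrix. By Cauchy–Schwarz,
`|μ|^(2m) ‖vᵀ √W‖² ≤ ‖v‖² tr(Aᵐ W (Aᵐ)ᵀ)`, so the single noise term `m = i - 1` of `c(i)`
already grows like `ρ(A)^(2i)`; all other terms of `c(i)` are nonnegative.
-/

noncomputable def specRad {n : ℕ} (Z : Matrix (Fin n) (Fin n) ℂ) : ℝ :=
  ⨆ μ ∈ spectrum ℂ Z, ‖μ‖

noncomputable def specRadR {n : ℕ} (Z : Matrix (Fin n) (Fin n) ℝ) : ℝ :=
  specRad (Z.map Complex.ofReal)

noncomputable def Matrix.PosSemidef.sqrt {m : Type*} [Fintype m] [DecidableEq m]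
    {𝕜 : Type*} [RCLike 𝕜] [PartialOrder 𝕜] {M : Matrix m m 𝕜} (hM : M.PosSemidef) : Matrix m m 𝕜 :=
  (hM.1.eigenvectorUnitary : Matrix m m 𝕜) *
    Matrix.diagonal ((↑) ∘ (fun x : ℝ => Real.sqrt x) ∘ hM.1.eigenvalues) *
    (star hM.1.eigenvectorUnitary : Matrix m m 𝕜)

open Matrix

theorem Matrix.PosSemidef.conjTranspose_sqrt {m 𝕜 : Type*} [Fintype m] [DecidableEq m]
    [RCLike 𝕜] [PartialOrder 𝕜] {M : Matrix m m 𝕜} (hM : M.PosSemidef) :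
    hM.sqrtᴴ = hM.sqrt := by
  rw [PosSemidef.sqrt, conjTranspose_mul, conjTranspose_mul, star_eq_conjTranspose,
    conjTranspose_conjTranspose, diagonal_conjTranspose, Matrix.mul_assoc]
  congr 3
  ext i
  simp

open scoped ComplexOrder in
theorem Matrix.PosSemidef.sqrt_mul_self {m 𝕜 : Type*} [Fintype m] [DecidableEq m] [RCLike 𝕜]
    {M : Matrix m m 𝕜} (hM : M.PosSemidef) : hM.sqrt * hM.sqrt = M := by
  conv_rhs => rw [hM.1.spectral_theorem, Unitary.conjStarAlgAut_apply]
  have hU : (star hM.1.eigenvectorUnitary : Matrix m m 𝕜) * hM.1.eigenvectorUnitary = 1 := by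
    simp
  simp only [PosSemidef.sqrt, Matrix.mul_assoc]
  rw [← Matrix.mul_assoc _ (hM.1.eigenvectorUnitary : Matrix m m 𝕜), hU, Matrix.one_mul,
    ← Matrix.mul_assoc (diagonal _), diagonal_mul_diagonal]
  congr 3
  ext i
  simp only [Function.comp_apply]
  rw [← RCLike.ofReal_mul, Real.mul_self_sqrt (hM.eigenvalues_nonneg i)]

theorem Matrix.exists_vecMul_eq_smul_of_mem_spectrum {K m : Type*} [Field K] [Fintype m]
    [DecidableEq m] {M : Matrix m m K} {μ : K} (hμ : μ ∈ spectrum K M) :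
    ∃ v ≠ 0, v ᵥ* M = μ • v := by
  rw [spectrum.mem_iff, Algebra.algebraMap_eq_smul_one, isUnit_iff_isUnit_det,
    isUnit_iff_ne_zero, not_not, ← exists_vecMul_eq_zero_iff] at hμ
  obtain ⟨v, hv0, hv⟩ := hμ
  refine ⟨v, hv0, ?_⟩
  rw [vecMul_sub, sub_eq_zero, vecMul_smul, vecMul_one] at hv
  exact hv.symm

theorem Matrix.vecMul_pow_eq_smul {R m : Type*} [CommSemiring R] [Fintype m] [DecidableEq m]
    {M : Matrix m m R} {v : m → R} {μ : R} (hv : v ᵥ* M = μ • v) (k : ℕ) :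
    v ᵥ* M ^ k = μ ^ k • v := by
  induction k with
  | zero => simp
  | succ k ih => rw [pow_succ, ← vecMul_vecMul, ih, smul_vecMul, hv, smul_smul, pow_succ]

theorem Matrix.PosSemidef.trace_mul_mul_transpose_nonneg {m k : Type*} [Fintype m] [Fintype k]
    {P : Matrix m m ℝ} (hP : P.PosSemidef) (X : Matrix k m ℝ) : 0 ≤ (X * P * Xᵀ).trace := by
  simpa only [conjTranspose_eq_transpose_of_trivial] using
    (hP.mul_mul_conjTranspose_same X).trace_nonneg

theorem sum_norm_sq_pos {ι E : Type*} [Fintype ι] [NormedAddCommGroup E] {v : ι → E}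
    (hv : v ≠ 0) : 0 < ∑ i, ‖v i‖ ^ 2 := by
  obtain ⟨i, hi⟩ := Function.ne_iff.mp hv
  exact Finset.sum_pos' (fun _ _ => by positivity)
    ⟨i, Finset.mem_univ i, pow_pos (norm_pos_iff.mpr hi) 2⟩

theorem Matrix.sum_norm_vecMul_sq_le {m k 𝕜 : Type*} [Fintype m] [Fintype k] [RCLike 𝕜]
    (v : m → 𝕜) (X : Matrix m k 𝕜) :
    ∑ p, ‖(v ᵥ* X) p‖ ^ 2 ≤ (∑ j, ‖v j‖ ^ 2) * ∑ j, ∑ p, ‖X j p‖ ^ 2 := by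
  have hcol : ∀ p, ‖(v ᵥ* X) p‖ ^ 2 ≤ (∑ j, ‖v j‖ ^ 2) * ∑ j, ‖X j p‖ ^ 2 := fun p =>
    calc ‖(v ᵥ* X) p‖ ^ 2 ≤ (∑ j, ‖v j‖ * ‖X j p‖) ^ 2 := by
          gcongr
          exact (norm_sum_le _ _).trans_eq (by simp only [norm_mul])
      _ ≤ (∑ j, ‖v j‖ ^ 2) * ∑ j, ‖X j p‖ ^ 2 := Finset.sum_mul_sq_le_sq_mul_sq _ _ _
  calc ∑ p, ‖(v ᵥ* X) p‖ ^ 2 ≤ ∑ p, (∑ j, ‖v j‖ ^ 2) * ∑ j, ‖X j p‖ ^ 2 :=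
        Finset.sum_le_sum fun p _ => hcol p
    _ = (∑ j, ‖v j‖ ^ 2) * ∑ j, ∑ p, ‖X j p‖ ^ 2 := by
        rw [← Finset.mul_sum, Finset.sum_comm]

theorem Matrix.trace_mul_transpose_self {m k : Type*} [Fintype m] [Fintype k]
    (X : Matrix m k ℝ) : (X * Xᵀ).trace = ∑ j, ∑ p, X j p ^ 2 := by
  simp [trace, mul_apply, sq]

theorem Matrix.sum_norm_vecMul_map_ofReal_sq_le {m k : Type*} [Fintype m] [Fintype k]
    (v : m → ℂ) (X : Matrix m k ℝ) :
    ∑ p, ‖(v ᵥ* X.map Complex.ofReal) p‖ ^ 2 ≤ (∑ j, ‖v j‖ ^ 2) * (X * Xᵀ).trace := by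
  simpa [trace_mul_transpose_self, Complex.norm_real] using
    sum_norm_vecMul_sq_le v (X.map Complex.ofReal)

theorem Matrix.eq_zero_of_vecMul_map_ofReal_eq_zero {m k : Type*} [Fintype m] [Fintype k]
    {C : Matrix m k ℝ} (hC : C.rank = Fintype.card m) {v : m → ℂ}
    (hv : v ᵥ* C.map Complex.ofReal = 0) : v = 0 := by
  have hinj : Function.Injective C.vecMul := by
    rw [vecMul_injective_iff, linearIndependent_iff_card_eq_finrank_span, ← hC,
      rank_eq_finrank_span_row, Set.finrank]
  have hre : (fun j => (v j).re) ᵥ* C = 0 := by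
    ext p
    simpa [vecMul, dotProduct, Complex.re_sum] using congrArg Complex.re (congrFun hv p)
  have him : (fun j => (v j).im) ᵥ* C = 0 := by
    ext p
    simpa [vecMul, dotProduct, Complex.im_sum] using congrArg Complex.im (congrFun hv p)
  funext j
  apply Complex.ext
  · simpa using congrFun (hinj (hre.trans (zero_vecMul C).symm)) j
  · simpa using congrFun (hinj (him.trans (zero_vecMul C).symm)) j

section SpectralRadius

variable {n : ℕ} (Z : Matrix (Fin n) (Fin n) ℂ)

theorem specRad_nonneg : 0 ≤ specRad Z :=
  Real.iSup_nonneg fun μ => Real.iSup_nonneg fun _ => norm_nonneg μ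

variable {Z}

theorem specRad_le {c : ℝ} (hc : 0 ≤ c) (h : ∀ μ ∈ spectrum ℂ Z, ‖μ‖ ≤ c) :
    specRad Z ≤ c :=
  Real.iSup_le (fun μ => Real.iSup_le (h μ) hc) hc

theorem specRad_eq_zero_of_spectrum_eq_empty (h : spectrum ℂ Z = ∅) : specRad Z = 0 :=
  (specRad_le le_rfl (by simp [h])).antisymm (specRad_nonneg Z)

theorem exists_mem_spectrum_specRad_le_norm (h : (spectrum ℂ Z).Nonempty) :
    ∃ μ ∈ spectrum ℂ Z, specRad Z ≤ ‖μ‖ := by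
  obtain ⟨μ, hμ, hmax⟩ := (Matrix.finite_spectrum Z).exists_maximalFor (‖·‖) _ h
  exact ⟨μ, hμ, specRad_le (norm_nonneg μ) fun ν hν =>
    (le_total ‖ν‖ ‖μ‖).elim id fun hle => hmax hν hle⟩

end SpectralRadius

/-- The column `(k, q)` is the `q`-th column of `Aᵏ B`, so this is `[B, AB, …, Aⁿ⁻¹B]`. -/
def controllabilityMatrix {n : ℕ} {κ : Type*} (A : Matrix (Fin n) (Fin n) ℝ)
    (B : Matrix (Fin n) κ ℝ) : Matrix (Fin n) (Fin n × κ) ℝ :=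
  of fun j p => (A ^ (p.1 : ℕ) * B) j p.2

theorem Matrix.vecMul_map_ofReal_pow_mul {m κ : Type*} [Fintype m] [DecidableEq m]
    {A : Matrix m m ℝ} {v : m → ℂ} {μ : ℂ} (hv : v ᵥ* A.map Complex.ofReal = μ • v)
    (B : Matrix m κ ℝ) (k : ℕ) :
    v ᵥ* (A ^ k * B).map Complex.ofReal = μ ^ k • (v ᵥ* B.map Complex.ofReal) := by
  have hmap : (A ^ k * B).map Complex.ofReal = A.map Complex.ofReal ^ k * B.map Complex.ofReal :=
    (Matrix.map_mul (f := Complex.ofRealHom)).trans <| by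
      rw [← RingHom.mapMatrix_apply, map_pow]
      rfl
  rw [hmap, ← vecMul_vecMul, vecMul_pow_eq_smul hv, smul_vecMul]

theorem vecMul_map_ofReal_ne_zero_of_rank_controllabilityMatrix {n : ℕ} {κ : Type*} [Fintype κ]
    {A : Matrix (Fin n) (Fin n) ℝ} {B : Matrix (Fin n) κ ℝ}
    (hC : (controllabilityMatrix A B).rank = n) {v : Fin n → ℂ} {μ : ℂ} (hv0 : v ≠ 0)
    (hv : v ᵥ* A.map Complex.ofReal = μ • v) : v ᵥ* B.map Complex.ofReal ≠ 0 := by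
  intro hB
  refine hv0 (eq_zero_of_vecMul_map_ofReal_eq_zero (by simpa using hC) ?_)
  ext ⟨k, q⟩
  have hkq := congrFun (vecMul_map_ofReal_pow_mul hv B k) q
  rw [hB, smul_zero] at hkq
  exact hkq

theorem exists_pos_mul_specRadR_pow_le_trace {n : ℕ} {A W : Matrix (Fin n) (Fin n) ℝ}
    (hW : W.PosSemidef) (hC : (controllabilityMatrix A hW.sqrt).rank = n)
    (hspec : (spectrum ℂ (A.map Complex.ofReal)).Nonempty) :
    ∃ γ > 0, ∀ m : ℕ, γ * specRadR A ^ (2 * m) ≤ (A ^ m * W * (A ^ m)ᵀ).trace := by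
  obtain ⟨μ, hμ, hρμ⟩ := exists_mem_spectrum_specRad_le_norm hspec
  obtain ⟨v, hv0, hv⟩ := exists_vecMul_eq_smul_of_mem_spectrum hμ
  set B := hW.sqrt
  have hBB : B * Bᵀ = W := by
    rw [← conjTranspose_eq_transpose_of_trivial, hW.conjTranspose_sqrt, hW.sqrt_mul_self]
  have hvB := vecMul_map_ofReal_ne_zero_of_rank_controllabilityMatrix hC hv0 hv
  refine ⟨(∑ p, ‖(v ᵥ* B.map Complex.ofReal) p‖ ^ 2) / ∑ j, ‖v j‖ ^ 2,
    div_pos (sum_norm_sq_pos hvB) (sum_norm_sq_pos hv0), fun m => ?_⟩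
  rw [div_mul_eq_mul_div, div_le_iff₀ (sum_norm_sq_pos hv0)]
  calc (∑ p, ‖(v ᵥ* B.map Complex.ofReal) p‖ ^ 2) * specRadR A ^ (2 * m)
      ≤ (∑ p, ‖(v ᵥ* B.map Complex.ofReal) p‖ ^ 2) * ‖μ‖ ^ (2 * m) := by
        gcongr
        exacts [specRad_nonneg _, hρμ]
    _ = ∑ p, ‖(v ᵥ* (A ^ m * B).map Complex.ofReal) p‖ ^ 2 := by
        simp only [vecMul_map_ofReal_pow_mul hv, Pi.smul_apply, smul_eq_mul, norm_mul,
          norm_pow, mul_pow, ← pow_mul, ← Finset.mul_sum]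
        ring
    _ ≤ (∑ j, ‖v j‖ ^ 2) * (A ^ m * B * (A ^ m * B)ᵀ).trace :=
        sum_norm_vecMul_map_ofReal_sq_le v _
    _ = (A ^ m * W * (A ^ m)ᵀ).trace * ∑ j, ‖v j‖ ^ 2 := by
        rw [transpose_mul, Matrix.mul_assoc, ← Matrix.mul_assoc B, hBB, ← Matrix.mul_assoc,
          mul_comm]

theorem stmt_15_general {n : ℕ} (A W P0 : Matrix (Fin n) (Fin n) ℝ)
    (hW : W.PosSemidef)
    (hctrb : (Matrix.of fun (j : Fin n) (p : Fin n × Fin n) =>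
        (A ^ (p.1 : ℕ) * hW.sqrt) j p.2).rank = n)
    (hP0 : P0.PosSemidef) :
    ∃ N : ℕ, ∃ η : ℝ, 0 < N ∧ 0 < η ∧ ∀ i : ℕ, N < i →
      η * specRadR A ^ (2 * i) ≤
        (A ^ i * P0 * (A ^ i).transpose).trace +
          ∑ m ∈ Finset.range i, (A ^ m * W * (A ^ m).transpose).trace := by
  have hnoise : ∀ m, 0 ≤ (A ^ m * W * (A ^ m)ᵀ).trace := fun m =>
    hW.trace_mul_mul_transpose_nonneg _
  rcases (spectrum ℂ (A.map Complex.ofReal)).eq_empty_or_nonempty with hspec | hspec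
  · refine ⟨1, 1, one_pos, one_pos, fun i hi => ?_⟩
    rw [specRadR, specRad_eq_zero_of_spectrum_eq_empty hspec, zero_pow (by omega), mul_zero]
    exact add_nonneg (hP0.trace_mul_mul_transpose_nonneg _)
      (Finset.sum_nonneg fun m _ => hnoise m)
  obtain ⟨γ, hγ, hγT⟩ := exists_pos_mul_specRadR_pow_le_trace hW hctrb hspec
  set ρ := specRadR A
  have hρ : 0 ≤ ρ := specRad_nonneg _
  -- `1 + ρ ^ 2` rather than `ρ ^ 2`, as `ρ` may vanish
  refine ⟨1, γ / (1 + ρ ^ 2), one_pos, by positivity, fun i hi => ?_⟩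
  obtain ⟨m, rfl⟩ : ∃ m, i = m + 1 := ⟨i - 1, by omega⟩
  calc γ / (1 + ρ ^ 2) * ρ ^ (2 * (m + 1)) = γ * ρ ^ (2 * m) * (ρ ^ 2 / (1 + ρ ^ 2)) := by
        rw [mul_add, pow_add]
        field_simp
        ring
    _ ≤ γ * ρ ^ (2 * m) :=
        mul_le_of_le_one_right (by positivity) ((div_le_one (by positivity)).mpr (by linarith))
    _ ≤ (A ^ m * W * (A ^ m)ᵀ).trace := hγT m
    _ ≤ ∑ l ∈ Finset.range (m + 1), (A ^ l * W * (A ^ l)ᵀ).trace :=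
        Finset.single_le_sum (fun l _ => hnoise l) (Finset.self_mem_range_succ m)
    _ ≤ _ := le_add_of_nonneg_left (hP0.trace_mul_mul_transpose_nonneg _)

theorem stmt_15 {n : ℕ} (A W P0 : Matrix (Fin n) (Fin n) ℝ)
    (hA : 1 ≤ specRadR A) (hW : W.PosSemidef)
    (hctrb : (Matrix.of fun (j : Fin n) (p : Fin n × Fin n) =>
        (A ^ (p.1 : ℕ) * hW.sqrt) j p.2).rank = n)
    (hP0 : P0.PosSemidef) :
    ∃ N : ℕ, ∃ η : ℝ, 0 < N ∧ 0 < η ∧ ∀ i : ℕ, N < i →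
      η * specRadR A ^ (2 * i) ≤
        (A ^ i * P0 * (A ^ i).transpose).trace +
          ∑ m ∈ Finset.range i, (A ^ m * W * (A ^ m).transpose).trace :=
  stmt_15_general A W P0 hW hctrb hP0
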